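/- For every α ∈ (0,1) and every integer k ≥ 0, one has α_{k+1} ≥ α_k^(1−1/p) and consequently α_k ≥ α^((1−1/p)^k); moreover the sequence (α_k) is strictly increasing and converges to 1 as k → ∞. -/

import Mathlib

/-- `mu p t = ((t - t^p)/((p-1)(1-t)))^(1/p)`, the real positive `p`th root. -/
noncomputable def mu (p : ℕ) (t : ℝ) : ℝ :=
  ((t - t ^ p) / (((p : ℝ) - 1) * (1 - t))) ^ ((1 : ℝ) / p)

/-- The sequence `α_0 = α`, `α_{k+1} = p α_k / ((p-1) μ(α_k) + μ(α_k)^(1-p) α_k^p)`. -/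
noncomputable def alphaSeq (p : ℕ) (α : ℝ) : ℕ → ℝ
  | 0 => α
  | k + 1 =>
      (p : ℝ) * alphaSeq p α k /
        (((p : ℝ) - 1) * mu p (alphaSeq p α k) +
          alphaSeq p α k ^ p / mu p (alphaSeq p α k) ^ (p - 1))

private lemma pow_sub_pow_le_aux {x y : ℝ} (hy : 0 ≤ y) (hxy : y ≤ x) (n : ℕ) :
    x ^ n - y ^ n ≤ n * x ^ (n - 1) * (x - y) := by
  have hx : 0 ≤ x := hy.trans hxy
  rw [← geom_sum₂_mul x y n]
  have hsum : (∑ i ∈ Finset.range n, x ^ i * y ^ (n - 1 - i)) ≤ n * x ^ (n - 1) := by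
    calc (∑ i ∈ Finset.range n, x ^ i * y ^ (n - 1 - i))
        ≤ ∑ _i ∈ Finset.range n, x ^ (n - 1) := by
          apply Finset.sum_le_sum
          intro i hi
          have hi' : i < n := Finset.mem_range.mp hi
          have h1 : y ^ (n - 1 - i) ≤ x ^ (n - 1 - i) := pow_le_pow_left₀ hy hxy _
          have h2 : x ^ i * y ^ (n - 1 - i) ≤ x ^ i * x ^ (n - 1 - i) :=
            mul_le_mul_of_nonneg_left h1 (pow_nonneg hx i)
          have h3 : x ^ i * x ^ (n - 1 - i) = x ^ (n - 1) := by
            rw [← pow_add]; congr 1; omega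
          linarith
      _ = n * x ^ (n - 1) := by
          rw [Finset.sum_const, Finset.card_range, nsmul_eq_mul]
  exact mul_le_mul_of_nonneg_right hsum (by linarith)

private lemma sum_lt1 (p : ℕ) (hp : 2 ≤ p) {t : ℝ} (ht0 : 0 < t) (ht1 : t < 1) :
    ((p : ℝ) - 1) * t ^ (p - 1) < ∑ i ∈ Finset.range (p - 1), t ^ i := by
  have h := Finset.sum_lt_sum (s := Finset.range (p - 1))
      (f := fun _ : ℕ => t ^ (p - 1)) (g := fun i : ℕ => t ^ i)
      (fun i hi => pow_le_pow_of_le_one ht0.le ht1.le (Finset.mem_range.mp hi).le)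
      ⟨0, Finset.mem_range.mpr (by omega),
        by simpa using pow_lt_one₀ ht0.le ht1 (by omega : p - 1 ≠ 0)⟩
  rw [Finset.sum_const, Finset.card_range, nsmul_eq_mul,
    Nat.cast_sub (by omega : 1 ≤ p), Nat.cast_one] at h
  exact h

private lemma sum_lt2 (p : ℕ) (hp : 2 ≤ p) {t : ℝ} (ht0 : 0 < t) (ht1 : t < 1) :
    ∑ i ∈ Finset.range p, t ^ i < (p : ℝ) := by
  have h := Finset.sum_lt_sum (s := Finset.range p)
      (f := fun i : ℕ => t ^ i) (g := fun _ : ℕ => (1 : ℝ))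
      (fun i _ => pow_le_one₀ ht0.le ht1.le)
      ⟨1, Finset.mem_range.mpr (by omega), by simpa using ht1⟩
  rw [Finset.sum_const, Finset.card_range, nsmul_eq_mul, mul_one] at h
  exact h

/-- The key one-step estimate. -/
private lemma key_step (p : ℕ) (hp : 2 ≤ p) {t : ℝ} (ht : t ∈ Set.Ioo (0:ℝ) 1) :
    ((p : ℝ) * t / (((p : ℝ) - 1) * mu p t + t ^ p / mu p t ^ (p - 1)) ∈ Set.Ioo t 1) ∧
    (p : ℝ) * t / (((p : ℝ) - 1) * mu p t + t ^ p / mu p t ^ (p - 1)) ≥ t ^ ((1:ℝ) - 1 / p) := by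
  obtain ⟨ht0, ht1⟩ := ht
  have hP2 : (2:ℝ) ≤ (p:ℝ) := by exact_mod_cast hp
  have hP0 : (0:ℝ) < (p:ℝ) := by linarith
  have hP1 : (0:ℝ) < (p:ℝ) - 1 := by linarith
  set S : ℝ := ∑ i ∈ Finset.range (p - 1), t ^ i with hS
  set T : ℝ := ∑ i ∈ Finset.range p, t ^ i with hT
  have hS0 : 0 < S := Finset.sum_pos (fun i _ => pow_pos ht0 i)
    (by rw [Finset.nonempty_range_iff]; omega)
  have hT0 : 0 < T := Finset.sum_pos (fun i _ => pow_pos ht0 i)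
    (by rw [Finset.nonempty_range_iff]; omega)
  have hK1 : ((p:ℝ) - 1) * t ^ (p - 1) < S := sum_lt1 p hp ht0 ht1
  have hK2 : T < (p:ℝ) := sum_lt2 p hp ht0 ht1
  have hTS : T = S + t ^ (p - 1) := by
    rw [hT, hS, ← Finset.sum_range_succ, Nat.sub_add_cancel (by omega : 1 ≤ p)]
  have htp : t ^ p = t ^ (p - 1) * t := by
    rw [← pow_succ, Nat.sub_add_cancel (by omega : 1 ≤ p)]
  have hgs : (1 - t) * S = 1 - t ^ (p - 1) := by
    have h := geom_sum_mul t (p - 1)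
    rw [← hS] at h
    linear_combination (-1 : ℝ) * h
  have hA : (t - t ^ p) / (((p:ℝ) - 1) * (1 - t)) = t * S / ((p:ℝ) - 1) := by
    have h1t : (1:ℝ) - t ≠ 0 := by linarith
    have hnum : t - t ^ p = t * ((1 - t) * S) := by rw [hgs, htp]; ring
    rw [hnum, div_eq_div_iff (mul_ne_zero (ne_of_gt hP1) h1t) (ne_of_gt hP1)]
    ring
  have hA0 : 0 < t * S / ((p:ℝ) - 1) := div_pos (mul_pos ht0 hS0) hP1
  set m : ℝ := mu p t with hm
  have hmu_eq : m = (t * S / ((p:ℝ) - 1)) ^ ((1:ℝ) / p) := by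
    rw [hm]; unfold mu; rw [hA]
  have hm0 : 0 < m := by rw [hmu_eq]; exact Real.rpow_pos_of_pos hA0 _
  have hmp : m ^ p = t * S / ((p:ℝ) - 1) := by
    rw [hmu_eq, ← Real.rpow_natCast (_ ^ ((1:ℝ)/p)) p, ← Real.rpow_mul hA0.le,
      one_div, inv_mul_cancel₀ (ne_of_gt hP0), Real.rpow_one]
  have hmm : m ^ (p - 1) * m = m ^ p := by
    rw [← pow_succ, Nat.sub_add_cancel (by omega : 1 ≤ p)]
  have hmp1 : m ^ (p - 1) ≠ 0 := (pow_pos hm0 _).ne'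
  have hD : ((p:ℝ) - 1) * m + t ^ p / m ^ (p - 1) = t * T / m ^ (p - 1) := by
    rw [eq_div_iff hmp1, add_mul, div_mul_cancel₀ _ hmp1]
    have h1 : ((p:ℝ) - 1) * m * m ^ (p - 1) = ((p:ℝ) - 1) * (t * S / ((p:ℝ) - 1)) := by
      rw [← hmp, ← hmm]; ring
    have h2 : ((p:ℝ) - 1) * (t * S / ((p:ℝ) - 1)) = t * S := by
      field_simp
    rw [h1, h2, hTS, htp]; ring
  set t' : ℝ := (p:ℝ) * t / (((p:ℝ) - 1) * m + t ^ p / m ^ (p - 1)) with ht'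
  have ht'_eq : t' = (p:ℝ) * m ^ (p - 1) / T := by
    rw [ht', hD, div_div_eq_mul_div,
      div_eq_div_iff (mul_pos ht0 hT0).ne' (ne_of_gt hT0)]
    ring
  have ht'0 : 0 < t' := by
    rw [ht'_eq]; exact div_pos (mul_pos hP0 (pow_pos hm0 _)) hT0
  have hKey : t' ^ p * (((p:ℝ) - 1) ^ (p - 1) * T ^ p)
      = (p:ℝ) ^ p * (t ^ (p - 1) * S ^ (p - 1)) := by
    rw [ht'_eq, div_pow, mul_pow]
    have h1 : (m ^ (p - 1)) ^ p = (m ^ p) ^ (p - 1) := by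
      rw [← pow_mul, ← pow_mul, Nat.mul_comm]
    rw [h1, hmp, div_pow, mul_pow]
    field_simp
  have htp1_0 : 0 < t ^ (p - 1) := pow_pos ht0 _
  -- K3 : (p-1)^(p-1) T^p ≤ p^p S^(p-1)
  have h1 : ((p:ℝ) - 1) * T ≤ (p:ℝ) * S := by
    have hexp : ((p:ℝ) - 1) * T = ((p:ℝ) - 1) * S + ((p:ℝ) - 1) * t ^ (p - 1) := by
      rw [hTS]; ring
    rw [hexp]; linarith [hK1]
  have h2 : (((p:ℝ) - 1) * T) ^ (p - 1) ≤ ((p:ℝ) * S) ^ (p - 1) :=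
    pow_le_pow_left₀ (mul_pos hP1 hT0).le h1 _
  have hpsplit : (p:ℝ) ^ p = (p:ℝ) ^ (p - 1) * (p:ℝ) := by
    rw [← pow_succ, Nat.sub_add_cancel (by omega : 1 ≤ p)]
  have hTsplit : T ^ p = T ^ (p - 1) * T := by
    rw [← pow_succ, Nat.sub_add_cancel (by omega : 1 ≤ p)]
  have hK3 : ((p:ℝ) - 1) ^ (p - 1) * T ^ p ≤ (p:ℝ) ^ p * S ^ (p - 1) := by
    calc ((p:ℝ) - 1) ^ (p - 1) * T ^ p = (((p:ℝ) - 1) * T) ^ (p - 1) * T := by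
          rw [mul_pow, hTsplit]; ring
      _ ≤ (((p:ℝ) - 1) * T) ^ (p - 1) * (p:ℝ) :=
          mul_le_mul_of_nonneg_left hK2.le (pow_nonneg (mul_pos hP1 hT0).le _)
      _ ≤ ((p:ℝ) * S) ^ (p - 1) * (p:ℝ) := mul_le_mul_of_nonneg_right h2 hP0.le
      _ = (p:ℝ) ^ p * S ^ (p - 1) := by rw [mul_pow, hpsplit]; ring
  -- K4 : (p-1)^(p-1) T^p t < p^p S^(p-1)
  have hK4 : ((p:ℝ) - 1) ^ (p - 1) * T ^ p * t < (p:ℝ) ^ p * S ^ (p - 1) := by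
    have hTt : T * t < (p:ℝ) := by
      have h9 := mul_lt_mul_of_pos_left ht1 hT0
      rw [mul_one] at h9
      linarith [hK2]
    calc ((p:ℝ) - 1) ^ (p - 1) * T ^ p * t = (((p:ℝ) - 1) * T) ^ (p - 1) * (T * t) := by
          rw [mul_pow, hTsplit]; ring
      _ < (((p:ℝ) - 1) * T) ^ (p - 1) * (p:ℝ) :=
          mul_lt_mul_of_pos_left hTt (pow_pos (mul_pos hP1 hT0) _)
      _ ≤ ((p:ℝ) * S) ^ (p - 1) * (p:ℝ) := mul_le_mul_of_nonneg_right h2 hP0.le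
      _ = (p:ℝ) ^ p * S ^ (p - 1) := by rw [mul_pow, hpsplit]; ring
  -- K5 : p^p t^(p-1) S^(p-1) < (p-1)^(p-1) T^p   (strict AM-GM)
  have hK5 : (p:ℝ) ^ p * (t ^ (p - 1) * S ^ (p - 1)) < ((p:ℝ) - 1) ^ (p - 1) * T ^ p := by
    set a : ℝ := S / ((p:ℝ) - 1) with ha
    set b : ℝ := t ^ (p - 1) with hb
    set c : ℝ := T / (p:ℝ) with hc
    have hb0 : 0 < b := htp1_0
    have hba : b < a := by
      rw [ha, lt_div_iff₀ hP1, hb]; linarith [hK1]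
    have ha0 : 0 < a := hb0.trans hba
    have hpc : (p:ℝ) * c = ((p:ℝ) - 1) * a + b := by
      rw [hb, hc, ha, hTS]
      field_simp
      rw [hb]
    have hca : c < a := by
      have hPca : (p:ℝ) * c < (p:ℝ) * a := by rw [hpc]; linarith [hba]
      exact lt_of_mul_lt_mul_left hPca hP0.le
    have hbc : b < c := by
      have hPbc : (p:ℝ) * b < (p:ℝ) * c := by
        rw [hpc]
        have h9 := mul_lt_mul_of_pos_left hba hP1
        linarith [h9]
      exact lt_of_mul_lt_mul_left hPbc hP0.le
    have hc0 : 0 < c := hb0.trans hbc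
    have hcast : ((p - 1 : ℕ) : ℝ) = (p:ℝ) - 1 := by
      rw [Nat.cast_sub (by omega : 1 ≤ p), Nat.cast_one]
    have hM : a ^ (p - 1) - c ^ (p - 1) ≤ ((p:ℝ) - 1) * a ^ (p - 1 - 1) * (a - c) := by
      have h := pow_sub_pow_le_aux hc0.le hca.le (p - 1)
      rwa [hcast] at h
    have hstep : a ^ (p - 1 - 1) * c < a ^ (p - 1) := by
      calc a ^ (p - 1 - 1) * c < a ^ (p - 1 - 1) * a :=
            mul_lt_mul_of_pos_left hca (pow_pos ha0 _)
        _ = a ^ (p - 1) := by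
            rw [← pow_succ, Nat.sub_add_cancel (by omega : 1 ≤ p - 1)]
    have hcsplit : c ^ p = c ^ (p - 1) * c := by
      rw [← pow_succ, Nat.sub_add_cancel (by omega : 1 ≤ p)]
    have hmain : a ^ (p - 1) * b < c ^ p := by
      have hbeq : b = c - ((p:ℝ) - 1) * (a - c) := by linear_combination (-1 : ℝ) * hpc
      have h5 : (a ^ (p - 1) - c ^ (p - 1)) * c
          ≤ ((p:ℝ) - 1) * a ^ (p - 1 - 1) * (a - c) * c :=
        mul_le_mul_of_nonneg_right hM hc0.le
      have h6 : (((p:ℝ) - 1) * (a - c)) * (a ^ (p - 1 - 1) * c)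
          < (((p:ℝ) - 1) * (a - c)) * a ^ (p - 1) :=
        mul_lt_mul_of_pos_left hstep (mul_pos hP1 (by linarith))
      rw [hbeq, hcsplit]
      linarith [h5, h6]
    have hscale : a ^ (p - 1) * b * (((p:ℝ) - 1) ^ (p - 1) * (p:ℝ) ^ p)
        < c ^ p * (((p:ℝ) - 1) ^ (p - 1) * (p:ℝ) ^ p) :=
      mul_lt_mul_of_pos_right hmain (mul_pos (pow_pos hP1 _) (pow_pos hP0 _))
    have hae : a ^ (p - 1) * ((p:ℝ) - 1) ^ (p - 1) = S ^ (p - 1) := by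
      rw [ha, div_pow, div_mul_cancel₀ _ (pow_pos hP1 _).ne']
    have hce : c ^ p * (p:ℝ) ^ p = T ^ p := by
      rw [hc, div_pow, div_mul_cancel₀ _ (pow_pos hP0 _).ne']
    calc (p:ℝ) ^ p * (t ^ (p - 1) * S ^ (p - 1))
        = a ^ (p - 1) * b * (((p:ℝ) - 1) ^ (p - 1) * (p:ℝ) ^ p) := by
          rw [← hae, hb]; ring
      _ < c ^ p * (((p:ℝ) - 1) ^ (p - 1) * (p:ℝ) ^ p) := hscale
      _ = ((p:ℝ) - 1) ^ (p - 1) * T ^ p := by rw [← hce]; ring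
  -- derive the bounds on t'^p
  have hden0 : 0 < ((p:ℝ) - 1) ^ (p - 1) * T ^ p := mul_pos (pow_pos hP1 _) (pow_pos hT0 _)
  have ht'p_lt1 : t' ^ p < 1 := by
    have h8 : t' ^ p * (((p:ℝ) - 1) ^ (p - 1) * T ^ p)
        < 1 * (((p:ℝ) - 1) ^ (p - 1) * T ^ p) := by
      rw [hKey, one_mul]; exact hK5
    exact lt_of_mul_lt_mul_right h8 hden0.le
  have ht'p_gt : t ^ p < t' ^ p := by
    have h7 : ((p:ℝ) - 1) ^ (p - 1) * T ^ p * t * t ^ (p - 1)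
        < (p:ℝ) ^ p * S ^ (p - 1) * t ^ (p - 1) :=
      mul_lt_mul_of_pos_right hK4 htp1_0
    have h8 : t ^ p * (((p:ℝ) - 1) ^ (p - 1) * T ^ p)
        < t' ^ p * (((p:ℝ) - 1) ^ (p - 1) * T ^ p) := by
      rw [hKey, htp]; linarith [h7]
    exact lt_of_mul_lt_mul_right h8 hden0.le
  have ht'p_ge : t ^ (p - 1) ≤ t' ^ p := by
    have h7 : ((p:ℝ) - 1) ^ (p - 1) * T ^ p * t ^ (p - 1)
        ≤ (p:ℝ) ^ p * S ^ (p - 1) * t ^ (p - 1) :=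
      mul_le_mul_of_nonneg_right hK3 htp1_0.le
    have h8 : t ^ (p - 1) * (((p:ℝ) - 1) ^ (p - 1) * T ^ p)
        ≤ t' ^ p * (((p:ℝ) - 1) ^ (p - 1) * T ^ p) := by
      rw [hKey]; linarith [h7]
    exact le_of_mul_le_mul_right h8 hden0
  have hlt1 : t' < 1 := by
    by_contra h
    push_neg at h
    have : (1:ℝ) ≤ t' ^ p := one_le_pow₀ h
    linarith
  have hgt : t < t' := by
    by_contra h
    push_neg at h
    have : t' ^ p ≤ t ^ p := pow_le_pow_left₀ ht'0.le h p
    linarith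
  refine ⟨⟨hgt, hlt1⟩, ?_⟩
  have hcast : ((p - 1 : ℕ) : ℝ) = (p:ℝ) - 1 := by
    rw [Nat.cast_sub (by omega : 1 ≤ p), Nat.cast_one]
  have hrw : t ^ ((1:ℝ) - 1 / p) = (t ^ (p - 1) : ℝ) ^ ((1:ℝ) / p) := by
    rw [← Real.rpow_natCast t (p - 1), ← Real.rpow_mul ht0.le, hcast]
    congr 1
    field_simp
  rw [ge_iff_le, hrw]
  calc (t ^ (p - 1) : ℝ) ^ ((1:ℝ) / p) ≤ (t' ^ p) ^ ((1:ℝ) / p) :=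
        Real.rpow_le_rpow (pow_nonneg ht0.le _) ht'p_ge (by positivity)
    _ = t' := by
        rw [← Real.rpow_natCast t' p, ← Real.rpow_mul ht'0.le,
          mul_one_div, div_self (ne_of_gt hP0), Real.rpow_one]

theorem alphaSeq_growth (p : ℕ) (hp : 2 ≤ p) (α : ℝ) (hα : α ∈ Set.Ioo (0 : ℝ) 1) :
    (∀ k : ℕ, alphaSeq p α (k + 1) ≥ alphaSeq p α k ^ ((1 : ℝ) - 1 / p)) ∧
    (∀ k : ℕ, alphaSeq p α k ≥ α ^ (((1 : ℝ) - 1 / p) ^ k)) ∧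
    StrictMono (alphaSeq p α) ∧
    Filter.Tendsto (alphaSeq p α) Filter.atTop (nhds 1) := by
  have hP2 : (2:ℝ) ≤ (p:ℝ) := by exact_mod_cast hp
  have hα0 := hα.1
  have he0 : (0:ℝ) ≤ 1 - 1 / p := by
    have h := one_div_le_one_div_of_le (by norm_num : (0:ℝ) < 2) hP2
    linarith
  have he1 : (1:ℝ) - 1 / p < 1 := by
    have : (0:ℝ) < 1 / p := by positivity
    linarith
  have hrec : ∀ n : ℕ, alphaSeq p α (n + 1) =
      (p : ℝ) * alphaSeq p α n /
        (((p : ℝ) - 1) * mu p (alphaSeq p α n) +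
          alphaSeq p α n ^ p / mu p (alphaSeq p α n) ^ (p - 1)) := fun n => rfl
  have hmem : ∀ k, alphaSeq p α k ∈ Set.Ioo (0:ℝ) 1 := by
    intro k
    induction k with
    | zero => exact hα
    | succ n ih =>
      have hk := (key_step p hp ih).1
      rw [hrec n]
      exact ⟨lt_trans ih.1 hk.1, hk.2⟩
  have hstep : ∀ k, alphaSeq p α (k + 1) ≥ alphaSeq p α k ^ ((1 : ℝ) - 1 / p) := by
    intro k
    rw [hrec k]
    exact (key_step p hp (hmem k)).2
  have hlow : ∀ k : ℕ, alphaSeq p α k ≥ α ^ (((1 : ℝ) - 1 / p) ^ k) := by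
    intro k
    induction k with
    | zero => simp only [pow_zero, Real.rpow_one, alphaSeq]; exact le_refl α
    | succ n ih =>
      have h1 : (α ^ (((1:ℝ) - 1 / p) ^ n)) ^ ((1:ℝ) - 1 / p)
          ≤ alphaSeq p α n ^ ((1:ℝ) - 1 / p) :=
        Real.rpow_le_rpow (Real.rpow_nonneg hα0.le _) ih he0
      have h2 : (α ^ (((1:ℝ) - 1 / p) ^ n)) ^ ((1:ℝ) - 1 / p)
          = α ^ (((1:ℝ) - 1 / p) ^ (n + 1)) := by
        rw [← Real.rpow_mul hα0.le, pow_succ]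
      calc α ^ (((1:ℝ) - 1 / p) ^ (n + 1))
          = (α ^ (((1:ℝ) - 1 / p) ^ n)) ^ ((1:ℝ) - 1 / p) := h2.symm
        _ ≤ alphaSeq p α n ^ ((1:ℝ) - 1 / p) := h1
        _ ≤ alphaSeq p α (n + 1) := hstep n
  have hmono : StrictMono (alphaSeq p α) := by
    apply strictMono_nat_of_lt_succ
    intro n
    have hk := (key_step p hp (hmem n)).1
    rw [hrec n]
    exact hk.1
  refine ⟨hstep, hlow, hmono, ?_⟩
  have hexp : Filter.Tendsto (fun k : ℕ => ((1:ℝ) - 1 / p) ^ k) Filter.atTop (nhds 0) :=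
    tendsto_pow_atTop_nhds_zero_of_lt_one he0 he1
  have hlower_tendsto : Filter.Tendsto (fun k : ℕ => α ^ (((1:ℝ) - 1 / p) ^ k))
      Filter.atTop (nhds 1) := by
    have hc : ContinuousAt (fun x : ℝ => α ^ x) 0 :=
      Real.continuousAt_const_rpow (ne_of_gt hα0)
    have h := hc.tendsto.comp hexp
    simpa [Real.rpow_zero, Function.comp_def] using h
  exact tendsto_of_tendsto_of_tendsto_of_le_of_le hlower_tendsto tendsto_const_nhds
    (fun k => hlow k) (fun k => (hmem k).2.le)
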